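/- arXiv:2404.05418 — 2 statements merged into one kernel-verified Lean document; each statement's English description precedes it below -/
import Mathlib

section
/- Let Δ₀, δ, φ, φ_ε be real numbers with 0 < Δ₀ ≤ π, Δ₀/2 ≤ δ ≤ Δ₀, Δ₀/2 < φ_ε ≤ φ, and φ − δ/2 ≤ π − (φ_ε − Δ₀/2). Then cos(φ − δ) − cos(φ) ≥ 2·sin(Δ₀/4)·sin(φ_ε − Δ₀/2) > 0. -/
/-!
By the product formula the gain is `2 sin (δ/2) sin (φ - δ/2)`. The first factor is at least
`sin (Δ₀/4)` since sine increases on `[0, π/2]`; the second is at least `sin (φε - Δ₀/2)` because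
`φ - δ/2` lies in `[φε - Δ₀/2, π - (φε - Δ₀/2)]`, where sine stays above its endpoint value.
-/

open Real

theorem Real.cos_sub_sub_cos (φ δ : ℝ) :
    cos (φ - δ) - cos φ = 2 * sin (δ / 2) * sin (φ - δ / 2) := by
  rw [cos_sub_cos, show (φ - δ + φ) / 2 = φ - δ / 2 by ring,
    show (φ - δ - φ) / 2 = -(δ / 2) by ring, sin_neg]
  ring

theorem Real.sin_le_sin_of_le_of_le_pi_sub {a x : ℝ} (ha : 0 ≤ a) (hax : a ≤ x)
    (hx : x ≤ π - a) : sin a ≤ sin x := by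
  rcases le_or_gt x (π / 2) with hx' | hx'
  · exact sin_le_sin_of_le_of_le_pi_div_two (by linarith) hx' hax
  · rw [← sin_pi_sub x]
    exact sin_le_sin_of_le_of_le_pi_div_two (by linarith) (by linarith) (by linarith)

/-- Quantitative step in the proof of Proposition 3 (Appendix B): under the
stated angle conditions, `cos(φ − δ) − cos φ ≥ 2·sin(Δ₀/4)·sin(φ_ε − Δ₀/2) > 0`. -/
theorem stmt_11 (Δ₀ δ φ φε : ℝ) (h1 : 0 < Δ₀) (h2 : Δ₀ ≤ Real.pi)
    (h3 : Δ₀ / 2 ≤ δ) (h4 : δ ≤ Δ₀) (h5 : Δ₀ / 2 < φε) (h6 : φε ≤ φ)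
    (h7 : φ - δ / 2 ≤ Real.pi - (φε - Δ₀ / 2)) :
    2 * Real.sin (Δ₀ / 4) * Real.sin (φε - Δ₀ / 2) ≤
        Real.cos (φ - δ) - Real.cos φ ∧
      0 < 2 * Real.sin (Δ₀ / 4) * Real.sin (φε - Δ₀ / 2) := by
  have hΔ : 0 < sin (Δ₀ / 4) := sin_pos_of_pos_of_lt_pi (by linarith) (by linarith)
  have hε : 0 < sin (φε - Δ₀ / 2) := sin_pos_of_pos_of_lt_pi (by linarith) (by linarith)
  have hδ : sin (Δ₀ / 4) ≤ sin (δ / 2) :=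
    sin_le_sin_of_le_of_le_pi_div_two (by linarith) (by linarith) (by linarith)
  have hφ : sin (φε - Δ₀ / 2) ≤ sin (φ - δ / 2) :=
    sin_le_sin_of_le_of_le_pi_sub (by linarith) (by linarith) h7
  refine ⟨?_, by positivity⟩
  rw [cos_sub_sub_cos, mul_assoc, mul_assoc]
  gcongr
  exact hΔ.le.trans hδ
end

section
/- Let (Ω, μ) be a probability space, C a real constant, and (Y_n)_{n∈ℕ} a sequence of integrable real-valued random variables such that almost surely Y_n ≤ Y_{n+1} for every n and Y_n ≤ C for every n. Suppose that for every ε > 0 there exist ε₁ > 0 and ρ > 0 such that for every n: μ( {ω : Y_{n+1}(ω) − Y_n(ω) ≥ ε₁} ∩ {ω : Y_n(ω) ≤ C − ε} ) ≥ ρ · μ( {ω : Y_n(ω) ≤ C − ε} ). Then Y_n converges to C almost surely. -/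
/-!
Markov's inequality bounds `ε₁ · μ{Y (n+1) - Y n ≥ ε₁}` by `E[Y (n+1)] - E[Y n]`; these increments
telescope and the expectations are bounded by `C`, so the probabilities of an `ε₁`-improvement
are summable and tend to `0`. On the event that the sequence stays `ε` below `C` forever, each of
these probabilities is at least `ρ` times its measure, which must therefore vanish. Outside these
countably many null events (`ε = 1/(k+1)`) the monotone sequence comes arbitrarily close to `C`.
-/

open MeasureTheory Filter Topology Set

section

variable {Ω : Type*} [MeasurableSpace Ω] {μ : Measure Ω}

theorem summable_measureReal_increment_ge {Y : ℕ → Ω → ℝ} {C ε₁ : ℝ}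
    (hint : ∀ n, Integrable (Y n) μ) (hmono : ∀ n, Y n ≤ᵐ[μ] Y (n + 1))
    (hC : ∀ n, ∫ ω, Y n ω ∂μ ≤ C) (hε₁ : 0 < ε₁) :
    Summable fun n => μ.real {ω | ε₁ ≤ Y (n + 1) ω - Y n ω} := by
  refine summable_of_sum_range_le (c := (C - ∫ ω, Y 0 ω ∂μ) / ε₁)
    (fun n => measureReal_nonneg) fun N => ?_
  have markov : ∀ n, ε₁ * μ.real {ω | ε₁ ≤ Y (n + 1) ω - Y n ω} ≤
      ∫ ω, Y (n + 1) ω ∂μ - ∫ ω, Y n ω ∂μ := fun n => by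
    rw [← integral_sub (hint (n + 1)) (hint n)]
    refine mul_meas_ge_le_integral_of_nonneg ?_ ((hint (n + 1)).sub (hint n)) ε₁
    filter_upwards [hmono n] with ω hω using sub_nonneg.2 hω
  rw [le_div_iff₀ hε₁, Finset.sum_mul]
  calc ∑ n ∈ Finset.range N, μ.real {ω | ε₁ ≤ Y (n + 1) ω - Y n ω} * ε₁
      ≤ ∑ n ∈ Finset.range N, (∫ ω, Y (n + 1) ω ∂μ - ∫ ω, Y n ω ∂μ) :=
        Finset.sum_le_sum fun n _ => by rw [mul_comm]; exact markov n
    _ = ∫ ω, Y N ω ∂μ - ∫ ω, Y 0 ω ∂μ := Finset.sum_range_sub (fun n => ∫ ω, Y n ω ∂μ) N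
    _ ≤ C - ∫ ω, Y 0 ω ∂μ := by linarith [hC N]

theorem measure_iInter_eq_zero_of_mul_le {A B : ℕ → Set Ω} {r : ENNReal} (hr : r ≠ 0)
    (hAB : ∀ n, r * μ (A n) ≤ μ (B n)) (hB : Tendsto (fun n => μ (B n)) atTop (𝓝 0)) :
    μ (⋂ n, A n) = 0 := by
  have hle : r * μ (⋂ n, A n) ≤ 0 :=
    ge_of_tendsto' hB fun n => (mul_le_mul_right (measure_mono (iInter_subset A n)) r).trans (hAB n)
  simpa [hr] using hle

theorem tendsto_measure_of_summable_measureReal [IsFiniteMeasure μ] {B : ℕ → Set Ω}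
    (hB : Summable fun n => μ.real (B n)) : Tendsto (fun n => μ (B n)) atTop (𝓝 0) := by
  rw [← ENNReal.tendsto_toReal_iff (fun n => measure_ne_top μ _) ENNReal.zero_ne_top]
  exact hB.tendsto_atTop_zero

end

theorem tendsto_of_monotone_of_forall_exists_gt {u : ℕ → ℝ} {C : ℝ} (hu : Monotone u)
    (hC : ∀ n, u n ≤ C) (hclose : ∀ k : ℕ, ∃ n, C - 1 / (k + 1) < u n) :
    Tendsto u atTop (𝓝 C) := by
  refine tendsto_atTop_isLUB hu ⟨forall_mem_range.2 hC, fun b hb => ?_⟩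
  have hlt : ∀ k : ℕ, C - 1 / ((k : ℝ) + 1) ≤ b := fun k => by
    obtain ⟨n, hn⟩ := hclose k
    exact hn.le.trans (hb (mem_range_self n))
  simpa using le_of_tendsto' (tendsto_const_nhds.sub tendsto_one_div_add_atTop_nhds_zero_nat) hlt

/-- Abstract form of Theorem 1 combined with Proposition 3: an a.s. monotone
sequence of integrable random variables bounded above by `C`, which whenever at
least `ε` below `C` has conditional probability at least `ρ` of improving by at
least `ε₁`, converges to `C` almost surely. -/
theorem stmt_13 {Ω : Type*} [MeasurableSpace Ω] (μ : Measure Ω)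
    [IsProbabilityMeasure μ] (C : ℝ) (Y : ℕ → Ω → ℝ)
    (hint : ∀ n, Integrable (Y n) μ)
    (hmono : ∀ᵐ ω ∂μ, ∀ n, Y n ω ≤ Y (n + 1) ω)
    (hbdd : ∀ᵐ ω ∂μ, ∀ n, Y n ω ≤ C)
    (himp : ∀ ε > (0 : ℝ), ∃ ε₁ > (0 : ℝ), ∃ ρ > (0 : ℝ), ∀ n : ℕ,
      ENNReal.ofReal ρ * μ {ω | Y n ω ≤ C - ε} ≤
        μ ({ω | ε₁ ≤ Y (n + 1) ω - Y n ω} ∩ {ω | Y n ω ≤ C - ε})) :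
    ∀ᵐ ω ∂μ, Filter.Tendsto (fun n => Y n ω) Filter.atTop (nhds C) := by
  have hC : ∀ n, ∫ ω, Y n ω ∂μ ≤ C := fun n => by
    simpa using integral_mono_ae (hint n) (integrable_const C) (hbdd.mono fun ω h => h n)
  have hstuck : ∀ ε > (0 : ℝ), μ (⋂ n, {ω | Y n ω ≤ C - ε}) = 0 := fun ε hε => by
    obtain ⟨ε₁, hε₁, ρ, hρ, himp⟩ := himp ε hε
    refine measure_iInter_eq_zero_of_mul_le (ENNReal.ofReal_pos.2 hρ).ne'
      (fun n => (himp n).trans (measure_mono inter_subset_left)) ?_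
    exact tendsto_measure_of_summable_measureReal
      (summable_measureReal_increment_ge hint (fun n => hmono.mono fun ω h => h n) hC hε₁)
  have hclose : ∀ᵐ ω ∂μ, ∀ k : ℕ, ∃ n, C - 1 / (k + 1) < Y n ω := ae_all_iff.2 fun k => by
    filter_upwards [measure_eq_zero_iff_ae_notMem.1 (hstuck _ Nat.one_div_pos_of_nat)] with ω hω
    simpa using hω
  filter_upwards [hmono, hbdd, hclose] with ω hmono hbdd hclose
  exact tendsto_of_monotone_of_forall_exists_gt (monotone_nat_of_le_succ hmono) hbdd hclose
end
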